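/- arXiv:2003.02801 — 2 statements merged into one kernel-verified Lean document; each statement's English description precedes it below -/
import Mathlib

section
/- Consider the 2CNF instance B_G built from a graph G = (V,E) and a subset E' ⊆ E as follows: for each vertex v a Boolean variable b(v); for each edge (u,v) ∈ E', the two clauses (b(u) ∨ b(v)) and (¬b(u) ∨ ¬b(v)); for each edge (u,v) ∈ E \ E', the two clauses (b(u) ∨ ¬b(v)) and (¬b(u) ∨ b(v)). For any S ⊆ V, under the assignment b(v) = [v ∈ S], the number of unsatisfied clauses of B_G is exactly |E_S ⊕ E'|, where E_S is the edge set of the cut (S, S̄). -/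
open scoped symmDiff

/-- In the 2CNF instance `B_G` (for each edge `(u,v) ∈ E'` the clauses
`b(u) ∨ b(v)` and `¬b(u) ∨ ¬b(v)`, for each edge `∉ E'` the clauses `b(u) ∨ ¬b(v)`
and `¬b(u) ∨ b(v)`), under the assignment `b(v) = [v ∈ S]` the number of
unsatisfied clauses equals `|E_S ⊕ E'|`. -/
theorem unsat_clauses_eq_cut_completion_cost
    {V E : Type*} [Fintype E] [DecidableEq E]
    (ep₁ ep₂ : E → V) (E' : Finset E) (S : Set V) [DecidablePred (· ∈ S)] :
    (∑ e : E,
      (let bu : Bool := decide (ep₁ e ∈ S)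
       let bv : Bool := decide (ep₂ e ∈ S)
       if e ∈ E' then
         ((if (bu || bv) then 0 else 1) + (if (!bu || !bv) then 0 else 1))
       else
         ((if (bu || !bv) then 0 else 1) + (if (!bu || bv) then 0 else 1)))) =
    (((Finset.univ.filter fun e => ((ep₁ e ∈ S) ≠ (ep₂ e ∈ S))) ∆ E').card) := by
  have h : ∀ X : Finset E, X.card = ∑ e : E, if e ∈ X then 1 else 0 := by
    intro X
    rw [Finset.sum_boole]
    simp
  rw [h]
  refine Finset.sum_congr rfl fun e _ => ?_
  by_cases h1 : ep₁ e ∈ S <;> by_cases h2 : ep₂ e ∈ S <;>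
    by_cases h3 : e ∈ E' <;>
    simp [Finset.mem_symmDiff, h1, h2, h3]
end

section
/- In the 2CNF instance B_G above, every truth assignment satisfies at least one of the two clauses associated to each edge; hence the minimum number of unsatisfied clauses over all assignments equals min over S ⊆ V of |E_S ⊕ E'|. -/
open scoped symmDiff

theorem aux_unsat_card
    {V E : Type*} [Fintype E] [DecidableEq E] [Fintype V] [DecidableEq V]
    (ep₁ ep₂ : E → V) (E' : Finset E) (b : V → Bool) (S : Finset V)
    (hS : ∀ v, v ∈ S ↔ b v = true) :
    (∑ e : E,
      (if e ∈ E' then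
         ((if (b (ep₁ e) || b (ep₂ e)) then 0 else 1) +
          (if (!b (ep₁ e) || !b (ep₂ e)) then 0 else 1))
       else
         ((if (b (ep₁ e) || !b (ep₂ e)) then 0 else 1) +
          (if (!b (ep₁ e) || b (ep₂ e)) then 0 else 1)))) =
    ((Finset.univ.filter fun e => ((ep₁ e ∈ S) ≠ (ep₂ e ∈ S))) ∆ E').card := by
  have h : ((Finset.univ.filter fun e => ((ep₁ e ∈ S) ≠ (ep₂ e ∈ S))) ∆ E')
      = Finset.univ.filter
        (fun e => e ∈ (Finset.univ.filter fun e => ((ep₁ e ∈ S) ≠ (ep₂ e ∈ S))) ∆ E') := by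
    ext e; simp
  rw [h, Finset.card_filter]
  apply Finset.sum_congr rfl
  intro e _
  cases h1 : b (ep₁ e) <;> cases h2 : b (ep₂ e) <;>
    by_cases he : e ∈ E' <;>
    simp [Finset.mem_symmDiff, Finset.mem_filter, hS, h1, h2, he]

/-- In the 2CNF instance `B_G`, every truth assignment satisfies at
least one clause of each pair associated to an edge; hence the minimum number of
unsatisfied clauses over all assignments equals `min_{S ⊆ V} |E_S ⊕ E'|`. -/
theorem min_unsat_eq_min_cut_completion
    {V E : Type*} [Fintype E] [DecidableEq E] [Fintype V] [DecidableEq V]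
    (ep₁ ep₂ : E → V) (E' : Finset E)
    (unsat : (V → Bool) → ℕ)
    (hunsat : ∀ b : V → Bool, unsat b = ∑ e : E,
      (if e ∈ E' then
         ((if (b (ep₁ e) || b (ep₂ e)) then 0 else 1) +
          (if (!b (ep₁ e) || !b (ep₂ e)) then 0 else 1))
       else
         ((if (b (ep₁ e) || !b (ep₂ e)) then 0 else 1) +
          (if (!b (ep₁ e) || b (ep₂ e)) then 0 else 1)))) :
    (∀ (b : V → Bool) (e : E),
      (if e ∈ E' then
        ((b (ep₁ e) || b (ep₂ e)) = true ∨ (!b (ep₁ e) || !b (ep₂ e)) = true)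
       else
        ((b (ep₁ e) || !b (ep₂ e)) = true ∨ (!b (ep₁ e) || b (ep₂ e)) = true))) ∧
    sInf {n : ℕ | ∃ b : V → Bool, unsat b = n} =
      sInf {n : ℕ | ∃ S : Finset V,
        (((Finset.univ.filter fun e => ((ep₁ e ∈ S) ≠ (ep₂ e ∈ S))) ∆ E').card) = n} := by
  constructor
  · intro b e
    by_cases he : e ∈ E' <;>
      simp [he] <;> cases h1 : b (ep₁ e) <;> cases h2 : b (ep₂ e) <;> simp
  · congr 1
    ext n
    constructor
    · rintro ⟨b, rfl⟩
      exact ⟨Finset.univ.filter (fun v => b v = true),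
        ((hunsat b).trans (aux_unsat_card ep₁ ep₂ E' b _
          (by intro v; simp))).symm⟩
    · rintro ⟨S, rfl⟩
      exact ⟨fun v => v ∈ S,
        ((hunsat _).trans (aux_unsat_card ep₁ ep₂ E' (fun v => decide (v ∈ S)) S
          (by intro v; simp)))⟩
end
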